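/- arXiv:1708.02064 — 5 statements merged into one kernel-verified Lean document; each statement's English description precedes it below -/
import Mathlib

section
/- For any positive integer n, any cardinal λ, and any elements α, β of the semigroup I_λ^n, the set α·I_λ^n·β = {αγβ : γ ∈ I_λ^n} is finite. -/
open Set Topology

universe v

namespace ISemi

/-- The set of partial injective transformations (partial bijections) of `ι`
with rank (cardinality of the range, equivalently of the domain) at most `n`. -/
def Elem (ι : Type*) (n : ℕ) : Type _ :=
  {f : ι ≃. ι // {a : ι | (f a).isSome}.encard ≤ (n : ℕ∞)}

variable {ι : Type*} {n : ℕ}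

/-- Composition of partial bijections (written multiplicatively). -/
instance : Semigroup (Elem ι n) where
  mul f g := ⟨f.1.trans g.1, by
    refine le_trans (Set.encard_mono ?_) f.2
    intro a ha
    simp only [Set.mem_setOf_eq] at *
    rcases Option.isSome_iff_exists.1 ha with ⟨c, hc⟩
    rcases (PEquiv.trans_eq_some _ _ _ _).1 hc with ⟨b, hb, -⟩
    simp [hb]⟩
  mul_assoc f g h := Subtype.ext (PEquiv.trans_assoc f.1 g.1 h.1)

/-- The inverse partial bijection. -/
def inv (f : Elem ι n) : Elem ι n := ⟨f.1.symm, by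
  have key : ∀ (g : ι ≃. ι), {b : ι | (g.symm b).isSome} ⊆
      (fun p : {a : ι | (g a).isSome} => (g p.1).get p.2) '' Set.univ := by
    intro g b hb
    rcases Option.isSome_iff_exists.1 hb with ⟨a, ha⟩
    have ha' : b ∈ g a := (PEquiv.mem_iff_mem g).1 (Option.mem_def.2 ha)
    simp only [Option.mem_def] at ha'
    refine ⟨⟨a, ?_⟩, Set.mem_univ _, ?_⟩
    · simp [Set.mem_setOf_eq, ha']
    · simp [ha']
  calc {b : ι | (f.1.symm b).isSome}.encard
      ≤ ((fun p : {a : ι | (f.1 a).isSome} => (f.1 p.1).get p.2) '' Set.univ).encard :=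
        Set.encard_mono (key f.1)
    _ ≤ (Set.univ : Set {a : ι | (f.1 a).isSome}).encard := Set.encard_image_le _ _
    _ = {a : ι | (f.1 a).isSome}.encard := by rw [Set.encard_univ, ENat.card_coe_set_eq]
    _ ≤ (n : ℕ∞) := f.2⟩

/-- The zero (the empty partial map). -/
def zero (ι : Type*) (n : ℕ) : Elem ι n := ⟨⊥, by simp [PEquiv.bot_apply]⟩

/-- idempotents -/
def IsIdem (e : Elem ι n) : Prop := e * e = e

/-- The natural partial order on the inverse semigroup `Elem ι n`:
`f ≼ g` iff `f = e * g` for some idempotent `e`. -/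
def nle (f g : Elem ι n) : Prop := ∃ e : Elem ι n, IsIdem e ∧ f = e * g

/-- up-set of `f` w.r.t. the natural partial order -/
def upset (f : Elem ι n) : Set (Elem ι n) := {g | nle f g}

/-- the rank of a partial bijection: the cardinality of its domain (= range) -/
noncomputable def rank (f : Elem ι n) : ℕ∞ := {a : ι | (f.1 a).isSome}.encard

def dom (f : Elem ι n) : Set ι := {a : ι | (f.1 a).isSome}

def ran (f : Elem ι n) : Set ι := {b : ι | (f.1.symm b).isSome}

/-- A topology on `Elem ι n` is shift-continuous if all left and right
translations are continuous. -/
def ShiftContinuous (ι : Type*) (n : ℕ) [TopologicalSpace (Elem ι n)] : Prop :=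
  ∀ a : Elem ι n, Continuous (fun x : Elem ι n => a * x) ∧
    Continuous (fun x : Elem ι n => x * a)

/-- A space is feebly compact if every locally finite family of nonempty open
sets is finite. -/
def FeeblyCompact (X : Type*) [TopologicalSpace X] : Prop :=
  ∀ 𝒰 : Set (Set X), (∀ U ∈ 𝒰, IsOpen U ∧ U.Nonempty) →
    LocallyFinite (fun U : 𝒰 => (U : Set X)) → 𝒰.Finite

/-- A space is `d`-feebly compact if every discrete family of open sets is
finite; a family is discrete if every point has a neighbourhood meeting at
most one member of the family. -/
def DFeeblyCompact (X : Type*) [TopologicalSpace X] : Prop :=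
  ∀ 𝒰 : Set (Set X), (∀ U ∈ 𝒰, IsOpen U) →
    (∀ x : X, ∃ V ∈ 𝓝 x, {U ∈ 𝒰 | (U ∩ V).Nonempty}.Subsingleton) → 𝒰.Finite

/-- countably pracompact: there is a dense set `A` such that every infinite
subset of `A` has an accumulation point in `X`. -/
def CountablyPracompact (X : Type*) [TopologicalSpace X] : Prop :=
  ∃ A : Set X, Dense A ∧ ∀ B ⊆ A, B.Infinite → ∃ x : X, AccPt x (Filter.principal B)

/-- H-closed: closed in every Hausdorff space in which it embeds. -/
def HClosed (X : Type*) [TopologicalSpace X] : Prop :=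
  ∀ (Y : Type v) (_ : TopologicalSpace Y), T2Space Y →
    ∀ e : X → Y, IsEmbedding e → IsClosed (Set.range e)

/-- infra H-closed: every continuous image in a first-countable Hausdorff
space is closed. -/
def InfraHClosed (X : Type*) [TopologicalSpace X] : Prop :=
  ∀ (Y : Type v) (_ : TopologicalSpace Y), T2Space Y →
    FirstCountableTopology Y → ∀ f : X → Y, Continuous f → IsClosed (Set.range f)

/-- `Y`-compactness: every continuous image in `Y` is compact. -/
def YCompact (X : Type*) [TopologicalSpace X] (Y : Type*) [TopologicalSpace Y] : Prop :=
  ∀ f : X → Y, Continuous f → IsCompact (Set.range f)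

/-- scattered: every nonempty subset has a point isolated in it. -/
def Scattered (X : Type*) [TopologicalSpace X] : Prop :=
  ∀ S : Set X, S.Nonempty → ∃ x ∈ S, ∃ U : Set X, IsOpen U ∧ U ∩ S = {x}

/-- semiregular: there is a base consisting of regular open sets. -/
def Semiregular (X : Type*) [TopologicalSpace X] : Prop :=
  ∃ B : Set (Set X), TopologicalSpace.IsTopologicalBasis B ∧
    ∀ U ∈ B, interior (closure U) = U

/-- countably compact: every countable open cover has a finite subcover. -/
def CountablyCompact (X : Type*) [TopologicalSpace X] : Prop :=
  ∀ 𝒰 : Set (Set X), 𝒰.Countable → (∀ U ∈ 𝒰, IsOpen U) → ⋃₀ 𝒰 = Set.univ →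
    ∃ 𝒱 ⊆ 𝒰, 𝒱.Finite ∧ ⋃₀ 𝒱 = Set.univ

end ISemi

/-!
A product `a * c * b` maps only points of the domain of `a` into the range of `b`, so its graph
lies in the finite set `dom a ×ˢ ran b`. A partial bijection is determined by its graph, hence
there are only finitely many such products.
-/

namespace PEquiv

variable {α β γ : Type*}

theorem graph_injective :
    Function.Injective fun f : α ≃. β => {p : α × β | p.2 ∈ f p.1} := by
  intro f g hfg
  refine PEquiv.ext fun x => Option.ext fun y => ?_
  exact Set.ext_iff.1 hfg (x, y)

theorem finite_setOf_graph_subset {D : Set α} {R : Set β} (hD : D.Finite) (hR : R.Finite) :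
    {f : α ≃. β | ∀ x y, y ∈ f x → x ∈ D ∧ y ∈ R}.Finite := by
  refine ((hD.prod hR).finite_subsets.preimage graph_injective.injOn).subset ?_
  intro f hf p hp
  exact hf p.1 p.2 hp

theorem mem_dom_and_mem_ran_of_mem_trans (f : α ≃. β) (g : β ≃. γ) {x : α} {z : γ}
    (h : z ∈ f.trans g x) : (f x).isSome ∧ (g.symm z).isSome := by
  obtain ⟨y, hy, hz⟩ := (PEquiv.trans_eq_some f g x z).1 h
  exact ⟨Option.isSome_iff_exists.2 ⟨y, hy⟩,
    Option.isSome_iff_exists.2 ⟨y, (PEquiv.mem_iff_mem g).2 hz⟩⟩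

end PEquiv

namespace ISemi

variable {ι : Type*} {n : ℕ}

theorem dom_finite (f : Elem ι n) : (dom f).Finite :=
  Set.finite_of_encard_le_coe f.2

theorem ran_finite (f : Elem ι n) : (ran f).Finite :=
  Set.finite_of_encard_le_coe (inv f).2

theorem mem_dom_and_mem_ran_of_mem_mul_mul (a c b : Elem ι n) {x y : ι}
    (h : y ∈ (a * c * b).1 x) : x ∈ dom a ∧ y ∈ ran b := by
  obtain ⟨hac, hb⟩ := PEquiv.mem_dom_and_mem_ran_of_mem_trans (a.1.trans c.1) b.1 h
  obtain ⟨z, hz⟩ := Option.isSome_iff_exists.1 hac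
  exact ⟨(PEquiv.mem_dom_and_mem_ran_of_mem_trans a.1 c.1 hz).1, hb⟩

end ISemi

theorem stmt1_general (ι : Type*) (n : ℕ) (a b : ISemi.Elem ι n) :
    {x : ISemi.Elem ι n | ∃ c : ISemi.Elem ι n, x = a * c * b}.Finite := by
  have hgraphs := PEquiv.finite_setOf_graph_subset (ISemi.dom_finite a) (ISemi.ran_finite b)
  refine (hgraphs.preimage Subtype.val_injective.injOn).subset ?_
  rintro _ ⟨c, rfl⟩ x y hy
  exact ISemi.mem_dom_and_mem_ran_of_mem_mul_mul a c b hy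

theorem stmt1 (ι : Type*) (n : ℕ) (hn : 0 < n) (a b : ISemi.Elem ι n) :
    {x : ISemi.Elem ι n | ∃ c : ISemi.Elem ι n, x = a * c * b}.Finite :=
  stmt1_general ι n a b
end

section
/- Let n be a positive integer, λ an infinite cardinal, and τ a shift-continuous T₁ topology on I_λ^n. Then the topological space (I_λ^n, τ) is functionally Hausdorff: for any two distinct points there is a continuous function to [0,1] separating them. -/
open Set Topology

universe v

/-!
Sandwiching `y` between the rank-one idempotents `e_aa` and `e_bb` gives `e_ab` if `y a = b` and
`0` otherwise. As translations are continuous and points are closed, `{y | y a = b}` is therefore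
both a fibre and the complement of a fibre of a continuous map, hence clopen. Two distinct partial
bijections differ at some point `a`, so one such set (or its complement) separates them, and its
indicator is the required function.
-/

lemma IsClopen.exists_continuous_Icc_zero_one {X : Type*} [TopologicalSpace X] {U : Set X}
    (hU : IsClopen U) {x y : X} (hx : x ∉ U) (hy : y ∈ U) :
    ∃ f : X → ℝ, Continuous f ∧ (∀ z, f z ∈ Icc (0 : ℝ) 1) ∧ f x = 0 ∧ f y = 1 := by
  classical
  refine ⟨U.indicator 1, hU.continuous_indicator continuous_const, fun z => ?_, by simp [hx],
    by simp [hy]⟩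
  by_cases hz : z ∈ U <;> simp [hz]

namespace ISemi

variable {ι : Type*} {n : ℕ}

section Single

variable [DecidableEq ι]

def single (hn : 0 < n) (a b : ι) : Elem ι n :=
  ⟨PEquiv.single a b, by
    have hdom : {x | (PEquiv.single a b x).isSome} = {a} := by
      ext x
      rcases eq_or_ne x a with rfl | hx
      · simp
      · simp [PEquiv.single_apply_of_ne hx.symm, hx]
    rw [hdom, encard_singleton]
    exact_mod_cast hn⟩

lemma single_ne_zero (hn : 0 < n) (a b : ι) : single hn a b ≠ zero ι n := fun h => by
  simpa [single, zero] using congrArg (fun f : Elem ι n => f.1 a) h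

lemma single_mul_mul_single (hn : 0 < n) (a b : ι) (y : Elem ι n) :
    single hn a a * y * single hn b b =
      if y.1 a = some b then single hn a b else zero ι n := by
  refine Subtype.ext <| PEquiv.ext fun c => ?_
  change ((PEquiv.single a a c).bind y.1).bind (PEquiv.single b b) = _
  rcases eq_or_ne c a with rfl | hc
  · split_ifs with hy
    · simp [single, hy]
    · rcases hd : y.1 c with _ | d
      · simp [zero, hd]
      · have hdb : d ≠ b := fun h => hy (by rw [hd, h])
        simp [zero, hd, PEquiv.single_apply_of_ne hdb.symm]
  · split_ifs <;> simp [single, zero, PEquiv.single_apply_of_ne hc.symm]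

end Single

section Topology

variable [TopologicalSpace (Elem ι n)] [T1Space (Elem ι n)]
  (hshift : ShiftContinuous ι n) (hn : 0 < n)
include hshift hn

lemma isClopen_setOf_apply_eq_some (a b : ι) : IsClopen {y : Elem ι n | y.1 a = some b} := by
  classical
  set g : Elem ι n → Elem ι n := fun y => single hn a a * y * single hn b b
  have hg : Continuous g := (hshift _).2.comp (hshift _).1
  have hfib : ∀ y, g y = if y.1 a = some b then single hn a b else zero ι n :=
    single_mul_mul_single hn a b
  constructor
  · convert (isClosed_singleton (x := single hn a b)).preimage hg using 1
    ext y
    simp only [mem_ofPred_eq, mem_preimage, mem_singleton_iff, hfib]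
    split_ifs with hy <;> simp [hy, (single_ne_zero hn a b).symm]
  · convert (isOpen_compl_singleton (x := zero ι n)).preimage hg using 1
    ext y
    simp only [mem_ofPred_eq, mem_preimage, mem_compl_iff, mem_singleton_iff, hfib]
    split_ifs with hy <;> simp [hy, single_ne_zero hn a b]

lemma exists_isClopen_notMem_mem {x y : Elem ι n} (hxy : x ≠ y) :
    ∃ U : Set (Elem ι n), IsClopen U ∧ x ∉ U ∧ y ∈ U := by
  obtain ⟨a, ha⟩ : ∃ a, x.1 a ≠ y.1 a := by
    by_contra! h
    exact hxy (Subtype.ext (PEquiv.ext h))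
  rcases hy : y.1 a with _ | b
  · obtain ⟨b, hx⟩ := Option.ne_none_iff_exists'.1 (hy ▸ ha)
    exact ⟨_, (isClopen_setOf_apply_eq_some hshift hn a b).compl, by simp [hx], by simp [hy]⟩
  · exact ⟨_, isClopen_setOf_apply_eq_some hshift hn a b, by simpa [hy] using ha, hy⟩

end Topology

end ISemi

theorem stmt6_general (ι : Type*) (n : ℕ) (hn : 0 < n)
    [TopologicalSpace (ISemi.Elem ι n)] [T1Space (ISemi.Elem ι n)]
    (hshift : ISemi.ShiftContinuous ι n) :
    ∀ x y : ISemi.Elem ι n, x ≠ y → ∃ f : ISemi.Elem ι n → ℝ,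
      Continuous f ∧ (∀ z, f z ∈ Set.Icc (0 : ℝ) 1) ∧ f x = 0 ∧ f y = 1 := by
  intro x y hxy
  obtain ⟨U, hU, hxU, hyU⟩ := ISemi.exists_isClopen_notMem_mem hshift hn hxy
  exact hU.exists_continuous_Icc_zero_one hxU hyU

theorem stmt6 (ι : Type*) [Infinite ι] (n : ℕ) (hn : 0 < n)
    [TopologicalSpace (ISemi.Elem ι n)] [T1Space (ISemi.Elem ι n)]
    (hshift : ISemi.ShiftContinuous ι n) :
    ∀ x y : ISemi.Elem ι n, x ≠ y → ∃ f : ISemi.Elem ι n → ℝ,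
      Continuous f ∧ (∀ z, f z ∈ Set.Icc (0 : ℝ) 1) ∧ f x = 0 ∧ f y = 1 :=
  stmt6_general ι n hn hshift
end

section
/- Define τ₀ on I_λ^n by declaring every non-zero element isolated and letting the whole space I_λ^n be the unique open neighbourhood of the zero (the empty partial map). Then τ₀ is a T₀ (but not T₁) topology making I_λ^n a semitopological semigroup with continuous inversion (in fact the multiplication and inversion are continuous). -/
open Set Topology

universe v

open ISemi in
/-- The topology in which every non-zero element is isolated and the whole
space is the unique open neighbourhood of zero. -/
def tau0 (ι : Type*) (n : ℕ) : TopologicalSpace (ISemi.Elem ι n) where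
  IsOpen U := ISemi.zero ι n ∈ U → U = Set.univ
  isOpen_univ := fun _ => rfl
  isOpen_inter := by
    intro U V hU hV h
    rw [hU h.1, hV h.2, Set.univ_inter]
  isOpen_sUnion := by
    intro S hS h
    obtain ⟨U, hU, hzU⟩ := h
    exact Set.eq_univ_of_univ_subset ((hS U hU hzU) ▸ Set.subset_sUnion_of_mem hU)

/-! `τ₀` is `nhdsAdjoint 0 ⊤`: the neighbourhood filter of `0` is `⊤` and every other point is
isolated. Hence every point specializes to `0`, which rules out `T₁` as soon as there is a
non-zero element, and a map into such a space is continuous once every point not sent to `0`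
is isolated. Since `0` is absorbing and `0⁻¹ = 0`, a pair with non-zero product consists of
two isolated points, and an element with non-zero inverse is isolated. -/

section nhdsAdjointTop

variable {α : Type*} (a : α)

lemma nhds_nhdsAdjoint_top_same : @nhds α (nhdsAdjoint a ⊤) a = ⊤ := by
  rw [nhds_nhdsAdjoint_same, sup_top_eq]

lemma specializes_nhdsAdjoint_top (b : α) : @Specializes α (nhdsAdjoint a ⊤) b a := by
  let := nhdsAdjoint a (⊤ : Filter α)
  rw [specializes_iff_nhds, nhds_nhdsAdjoint_top_same]
  exact le_top

lemma t0Space_nhdsAdjoint (f : Filter α) : @T0Space α (nhdsAdjoint a f) := by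
  let := nhdsAdjoint a f
  refine ⟨fun x y hxy => ?_⟩
  by_cases hx : x = a
  · subst hx
    by_contra hne
    exact hne ((hxy.mem_open_iff (isOpen_singleton_nhdsAdjoint f (Ne.symm hne))).2 rfl)
  · exact ((hxy.mem_open_iff (isOpen_singleton_nhdsAdjoint f hx)).1 rfl).symm

lemma not_t1Space_nhdsAdjoint_top {b : α} (hb : b ≠ a) : ¬ @T1Space α (nhdsAdjoint a ⊤) :=
  fun _ => hb (@Specializes.eq _ (nhdsAdjoint a ⊤) _ _ _ (specializes_nhdsAdjoint_top a b))

lemma continuous_nhdsAdjoint_top {X : Type*} [TopologicalSpace X] {g : X → α}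
    (hg : ∀ x, g x ≠ a → 𝓝 x = pure x) : Continuous[_, nhdsAdjoint a ⊤] g := by
  let := nhdsAdjoint a ⊤
  refine continuous_iff_continuousAt.2 fun x => ?_
  by_cases hx : g x = a
  · rw [ContinuousAt, hx, nhds_nhdsAdjoint_top_same]
    exact le_top
  · rw [ContinuousAt, hg x hx]
    exact tendsto_pure_nhds g x

end nhdsAdjointTop

namespace ISemi

variable {ι : Type*} {n : ℕ}

lemma tau0_eq_nhdsAdjoint : tau0 ι n = nhdsAdjoint (zero ι n) ⊤ :=
  TopologicalSpace.ext <| funext fun _ => propext <| imp_congr_right fun _ => Filter.mem_top.symm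

lemma zero_mul (f : Elem ι n) : zero ι n * f = zero ι n :=
  Subtype.ext (PEquiv.bot_trans _)

lemma mul_zero (f : Elem ι n) : f * zero ι n = zero ι n :=
  Subtype.ext (PEquiv.trans_bot _)

lemma inv_zero : inv (zero ι n) = zero ι n :=
  Subtype.ext PEquiv.symm_bot

lemma exists_ne_zero [Nonempty ι] (hn : 0 < n) : ∃ f : Elem ι n, f ≠ zero ι n := by
  classical
  obtain ⟨a⟩ := ‹Nonempty ι›
  have hdom : {x : ι | (PEquiv.single a a x).isSome} = {a} := by
    ext x
    by_cases hx : x = a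
    · simp [hx]
    · simp [hx, PEquiv.single_apply_of_ne (Ne.symm hx)]
  refine ⟨⟨PEquiv.single a a, ?_⟩, fun h => ?_⟩
  · rw [hdom, Set.encard_singleton]
    exact_mod_cast hn
  · simpa [zero, PEquiv.bot_apply] using congrArg (fun f : Elem ι n => f.1 a) h

end ISemi

theorem stmt11 (ι : Type*) [Infinite ι] (n : ℕ) (hn : 0 < n) :
    @T0Space (ISemi.Elem ι n) (tau0 ι n) ∧
    ¬ @T1Space (ISemi.Elem ι n) (tau0 ι n) ∧
    @Continuous (ISemi.Elem ι n × ISemi.Elem ι n) (ISemi.Elem ι n)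
      (@instTopologicalSpaceProd _ _ (tau0 ι n) (tau0 ι n)) (tau0 ι n)
      (fun p => p.1 * p.2) ∧
    @Continuous (ISemi.Elem ι n) (ISemi.Elem ι n) (tau0 ι n) (tau0 ι n) ISemi.inv := by
  open ISemi in
  rw [tau0_eq_nhdsAdjoint]
  let := nhdsAdjoint (zero ι n) ⊤
  obtain ⟨f, hf⟩ := exists_ne_zero (ι := ι) hn
  refine ⟨t0Space_nhdsAdjoint _ _, not_t1Space_nhdsAdjoint_top _ hf, ?_, ?_⟩
  · refine continuous_nhdsAdjoint_top _ fun p hp => ?_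
    have hp₁ : p.1 ≠ zero ι n := fun h => hp (by rw [h, zero_mul])
    have hp₂ : p.2 ≠ zero ι n := fun h => hp (by rw [h, mul_zero])
    rw [nhds_prod_eq, nhds_nhdsAdjoint_of_ne _ hp₁, nhds_nhdsAdjoint_of_ne _ hp₂,
      Filter.prod_pure_pure]
  · refine continuous_nhdsAdjoint_top _ fun x hx => nhds_nhdsAdjoint_of_ne _ fun h => ?_
    exact hx (by rw [h, inv_zero])
end

section
/- With the topology τ_c generated by the base of sets ↑α \ (↑α₁ ∪ ⋯ ∪ ↑α_k), the semigroup I_λ^n is a semitopological semigroup with continuous inversion: all translations x ↦ ax, x ↦ xa and the inversion map are continuous. -/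
open Set Topology

universe v

open ISemi in
/-- The base `B_c` of the topology `τ_c`. -/
def Bc (ι : Type*) (n : ℕ) : Set (Set (ISemi.Elem ι n)) :=
  {V | ∃ (f : ISemi.Elem ι n) (F : Finset (ISemi.Elem ι n)),
    ↑F ⊆ ISemi.upset f \ {f} ∧ V = ISemi.upset f \ ⋃ g ∈ F, ISemi.upset g}

/-- The topology `τ_c` generated by the base `B_c`. -/
def tauc (ι : Type*) (n : ℕ) : TopologicalSpace (ISemi.Elem ι n) :=
  TopologicalSpace.generateFrom (Bc ι n)

/-! `nle` is inclusion of graphs of partial bijections, so inversion is an order automorphism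
mapping basic sets to basic sets, and `x * a = inv (inv a * inv x)` reduces right translations to
left ones. For a left translation, `{x | g ≤ a * x}` is empty unless `a * (a⁻¹ * g) = g`, and then
it is the up-set of `a⁻¹ * g`; as `g ↦ a⁻¹ * g` is monotone and injective on such `g`, the
preimage of a basic set is again a basic set or empty. -/

namespace PEquiv

variable {α β γ : Type*}

theorem trans_mono {f f' : α ≃. β} {g g' : β ≃. γ} (hf : f ≤ f') (hg : g ≤ g') :
    f.trans g ≤ f'.trans g' := by
  intro a c hc
  obtain ⟨b, hab, hbc⟩ := (mem_trans f g a c).1 hc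
  exact (mem_trans f' g' a c).2 ⟨b, hf a b hab, hg b c hbc⟩

theorem symm_le_symm {f g : α ≃. β} : f.symm ≤ g.symm ↔ f ≤ g := by
  refine ⟨fun h a b hab => ?_, fun h b a hba => ?_⟩
  · exact (mem_iff_mem g).1 (h b a ((mem_iff_mem f).2 hab))
  · exact (mem_iff_mem g).2 (h a b ((mem_iff_mem f).1 hba))

theorem le_refl_of_trans_self {e : α ≃. α} (he : e.trans e = e) : e ≤ PEquiv.refl α := by
  intro a b hab
  have hbb : b ∈ e b := by
    have hab' : b ∈ (e.trans e) a := by rwa [he]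
    obtain ⟨c, hac, hcb⟩ := (mem_trans e e a b).1 hab'
    rwa [Option.mem_unique hac hab] at hcb
  rw [e.inj hab hbb]
  exact refl_apply b

theorem trans_symm_trans_of_le {f g : α ≃. β} (h : f ≤ g) : (f.trans f.symm).trans g = f := by
  ext a b
  rw [← Option.mem_def, mem_trans]
  constructor
  · rintro ⟨a', ha', hb⟩
    obtain ⟨c, hc, hca'⟩ := (mem_trans f f.symm a a').1 ha'
    rw [mem_iff_mem] at hca'
    rw [f.inj hca' hc] at hb
    rwa [Option.mem_unique hb (h a c hc)]
  · intro hab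
    exact ⟨a, (mem_trans _ _ _ _).2 ⟨b, hab, (mem_iff_mem f).2 hab⟩, h a b hab⟩

theorem symm_trans_le_of_le_trans {f : α ≃. γ} {a : α ≃. β} {x : β ≃. γ}
    (h : f ≤ a.trans x) : a.symm.trans f ≤ x := by
  intro b c hbc
  obtain ⟨t, hbt, htc⟩ := (mem_trans _ _ _ _).1 hbc
  obtain ⟨b', htb', hb'c⟩ := (mem_trans _ _ _ _).1 (h t c htc)
  rwa [Option.mem_unique htb' ((mem_iff_mem a).1 hbt)] at hb'c

theorem trans_symm_trans_of_le_trans {f : α ≃. γ} {a : α ≃. β} {x : β ≃. γ}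
    (h : f ≤ a.trans x) : a.trans (a.symm.trans f) = f := by
  refine le_antisymm (fun t c htc => ?_) (fun t c htc => ?_)
  · obtain ⟨b, htb, hbc⟩ := (mem_trans _ _ _ _).1 htc
    obtain ⟨t', hbt', ht'c⟩ := (mem_trans _ _ _ _).1 hbc
    rwa [a.inj ((mem_iff_mem a).1 hbt') htb] at ht'c
  · obtain ⟨b, htb, -⟩ := (mem_trans _ _ _ _).1 (h t c htc)
    exact (mem_trans _ _ _ _).2 ⟨b, htb, (mem_trans _ _ _ _).2 ⟨t, (mem_iff_mem a).2 htb, htc⟩⟩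

end PEquiv

namespace ISemi

variable {ι : Type*} {n : ℕ}

theorem val_inv (f : Elem ι n) : (inv f).1 = f.1.symm := rfl

theorem inv_inv (f : Elem ι n) : inv (inv f) = f := Subtype.ext (PEquiv.symm_symm f.1)

theorem inv_mul_rev (f g : Elem ι n) : inv (f * g) = inv g * inv f :=
  Subtype.ext (PEquiv.symm_trans_rev f.1 g.1)

theorem nle_iff_le {f g : Elem ι n} : nle f g ↔ f.1 ≤ g.1 := by
  constructor
  · rintro ⟨e, he, rfl⟩
    calc e.1.trans g.1 ≤ (PEquiv.refl ι).trans g.1 :=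
          PEquiv.trans_mono (PEquiv.le_refl_of_trans_self (congrArg Subtype.val he)) le_rfl
      _ = g.1 := PEquiv.refl_trans g.1
  · intro h
    refine ⟨f * inv f, Subtype.ext ?_, Subtype.ext (PEquiv.trans_symm_trans_of_le h).symm⟩
    change (f.1.trans f.1.symm).trans (f.1.trans f.1.symm) = f.1.trans f.1.symm
    rw [← PEquiv.trans_assoc, PEquiv.trans_symm_trans_of_le le_rfl]

theorem mem_upset {f g : Elem ι n} : g ∈ upset f ↔ f.1 ≤ g.1 := nle_iff_le

theorem inv_mem_upset_iff {f g : Elem ι n} : inv g ∈ upset f ↔ g ∈ upset (inv f) := by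
  rw [mem_upset, mem_upset, val_inv, val_inv, ← PEquiv.symm_le_symm, PEquiv.symm_symm]

theorem mul_mem_upset_iff {a g x : Elem ι n} (hg : a * (inv a * g) = g) :
    a * x ∈ upset g ↔ x ∈ upset (inv a * g) := by
  rw [mem_upset, mem_upset]
  refine ⟨PEquiv.symm_trans_le_of_le_trans, fun hx => ?_⟩
  rw [← hg]
  exact PEquiv.trans_mono le_rfl hx

theorem mul_notMem_upset {a g x : Elem ι n} (hg : a * (inv a * g) ≠ g) : a * x ∉ upset g :=
  fun hx => hg (Subtype.ext (PEquiv.trans_symm_trans_of_le_trans (mem_upset.1 hx)))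

theorem preimage_mul_left_upset {a g : Elem ι n} (hg : a * (inv a * g) = g) :
    (a * ·) ⁻¹' upset g = upset (inv a * g) :=
  ext fun _ => mul_mem_upset_iff hg

theorem preimage_mul_left_biUnion_upset [DecidableEq (Elem ι n)] (a : Elem ι n)
    (F : Finset (Elem ι n)) :
    (a * ·) ⁻¹' ⋃ g ∈ F, upset g =
      ⋃ g ∈ F.filter (fun g => a * (inv a * g) = g), upset (inv a * g) := by
  ext x
  simp only [preimage_iUnion₂, mem_iUnion, mem_preimage, Finset.mem_filter, exists_prop]
  constructor
  · rintro ⟨g, hgF, hx⟩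
    by_cases hg : a * (inv a * g) = g
    · exact ⟨g, ⟨hgF, hg⟩, (mul_mem_upset_iff hg).1 hx⟩
    · exact (mul_notMem_upset hg hx).elim
  · rintro ⟨g, ⟨hgF, hg⟩, hx⟩
    exact ⟨g, hgF, (mul_mem_upset_iff hg).2 hx⟩

section Topology

attribute [local instance] tauc

theorem continuous_iff_isOpen_preimage_Bc {φ : Elem ι n → Elem ι n} :
    Continuous φ ↔ ∀ V ∈ Bc ι n, IsOpen (φ ⁻¹' V) :=
  continuous_generateFrom_iff

theorem isOpen_upset_diff {f : Elem ι n} {F : Finset (Elem ι n)}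
    (hF : ∀ g ∈ F, f.1 ≤ g.1 ∧ g ≠ f) : IsOpen (upset f \ ⋃ g ∈ F, upset g) :=
  TopologicalSpace.isOpen_generateFrom_of_mem
    ⟨f, F, fun g hg => ⟨mem_upset.2 (hF g hg).1, (hF g hg).2⟩, rfl⟩

theorem continuous_inv : Continuous (inv : Elem ι n → Elem ι n) := by
  classical
  refine continuous_iff_isOpen_preimage_Bc.2 ?_
  rintro _ ⟨f, F, hF, rfl⟩
  have hpre : inv ⁻¹' (upset f \ ⋃ g ∈ F, upset g) = upset (inv f) \ ⋃ g ∈ F, upset (inv g) := by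
    ext x
    simp only [mem_preimage, mem_sdiff, mem_iUnion, inv_mem_upset_iff]
  rw [hpre, ← Finset.set_biUnion_finset_image]
  refine isOpen_upset_diff fun _ hg => ?_
  obtain ⟨g, hgF, rfl⟩ := Finset.mem_image.1 hg
  obtain ⟨hfg, hne⟩ := hF hgF
  exact ⟨PEquiv.symm_le_symm.2 (mem_upset.1 hfg),
    fun h => hne (by rw [mem_singleton_iff, ← inv_inv g, h, inv_inv])⟩

theorem continuous_mul_left (a : Elem ι n) : Continuous (a * ·) := by
  classical
  refine continuous_iff_isOpen_preimage_Bc.2 ?_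
  rintro _ ⟨f, F, hF, rfl⟩
  rw [preimage_sdiff]
  by_cases hf : a * (inv a * f) = f
  swap
  · convert isOpen_empty
    exact sdiff_eq_empty.2 fun x hx => (mul_notMem_upset hf hx).elim
  rw [preimage_mul_left_upset hf, preimage_mul_left_biUnion_upset,
    ← Finset.set_biUnion_finset_image]
  refine isOpen_upset_diff fun _ hg' => ?_
  obtain ⟨g, hg, rfl⟩ := Finset.mem_image.1 hg'
  obtain ⟨hgF, hg⟩ := Finset.mem_filter.1 hg
  obtain ⟨hfg, hne⟩ := hF hgF
  refine ⟨PEquiv.trans_mono le_rfl (mem_upset.1 hfg), fun h => hne ?_⟩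
  calc g = a * (inv a * g) := hg.symm
    _ = a * (inv a * f) := by rw [h]
    _ = f := hf

theorem continuous_mul_right (a : Elem ι n) : Continuous (· * a) := by
  have h : (· * a) = inv ∘ (inv a * ·) ∘ (inv : Elem ι n → Elem ι n) := by
    funext x
    simp only [Function.comp_apply, inv_mul_rev, inv_inv]
  rw [h]
  exact continuous_inv.comp ((continuous_mul_left _).comp continuous_inv)

end Topology

end ISemi

theorem stmt13_general (ι : Type*) (n : ℕ) :
    (∀ a : ISemi.Elem ι n,
      @Continuous _ _ (tauc ι n) (tauc ι n) (fun x : ISemi.Elem ι n => a * x) ∧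
      @Continuous _ _ (tauc ι n) (tauc ι n) (fun x : ISemi.Elem ι n => x * a)) ∧
    @Continuous _ _ (tauc ι n) (tauc ι n) (ISemi.inv : ISemi.Elem ι n → ISemi.Elem ι n) :=
  ⟨fun a => ⟨ISemi.continuous_mul_left a, ISemi.continuous_mul_right a⟩, ISemi.continuous_inv⟩

theorem stmt13 (ι : Type*) [Infinite ι] (n : ℕ) (hn : 0 < n) :
    (∀ a : ISemi.Elem ι n,
      @Continuous _ _ (tauc ι n) (tauc ι n) (fun x : ISemi.Elem ι n => a * x) ∧
      @Continuous _ _ (tauc ι n) (tauc ι n) (fun x : ISemi.Elem ι n => x * a)) ∧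
    @Continuous _ _ (tauc ι n) (tauc ι n) (ISemi.inv : ISemi.Elem ι n → ISemi.Elem ι n) :=
  stmt13_general ι n
end

section
/- Let n be a positive integer, λ an infinite cardinal. Every countably compact scattered T₃ space is sequentially compact; consequently the compact semitopological semigroup (I_λ^n, τ_c) is sequentially compact. -/
open Set Topology

universe v

universe u

/-!
A sequence `u` in a countably compact space has cluster points; if the space is scattered, one of
them, `x`, is isolated among them, and by regularity some closed neighbourhood `C` of `x` contains
no other. A subsequence of `u` lying in `C` then has `x` as its only cluster point, which in a
countably compact space forces it to converge to `x`.

For `τ_c`, view each element as its graph, a set of at most `n` pairs; the natural order is graph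
inclusion. Passing to a subsequence, all graphs contain a common root `r` while every pair outside
`r` lies in only finitely many of them. The restriction of any term to `r` is then a limit: a basic
neighbourhood `↑α \ (↑α₁ ∪ ⋯ ∪ ↑αₖ)` of it only asks the graphs to contain `graph α ⊆ r` and to miss
one pair outside `r` from each `graph αᵢ`.
-/

open Filter

section CountablyCompact

variable {X : Type*} [TopologicalSpace X]

theorem ISemi.CountablyCompact.countablyCompactSpace (hX : ISemi.CountablyCompact X) :
    CountablyCompactSpace X := by
  refine ⟨isCountablyCompact_iff_countable_open_cover'.2 fun U hU hcover => ?_⟩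
  obtain ⟨𝒱, h𝒱U, h𝒱fin, h𝒱⟩ := hX (range U) (countable_range U) (forall_mem_range.2 hU)
    (by rw [sUnion_range]; exact univ_subset_iff.1 hcover)
  obtain ⟨I, hIfin, hI⟩ := finite_subset_iUnion h𝒱fin (h𝒱U.trans (iUnion_singleton_eq_range U).ge)
  refine ⟨I, hIfin, fun x _ => ?_⟩
  obtain ⟨V, hV, hxV⟩ := h𝒱 ▸ mem_univ x
  obtain ⟨i, hi, rfl⟩ : ∃ i ∈ I, V = U i := by simpa using hI hV
  exact mem_biUnion hi hxV

theorem CountablyCompactSpace.exists_mapClusterPt [CountablyCompactSpace X] (u : ℕ → X) :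
    ∃ x, MapClusterPt x atTop u :=
  let ⟨x, _, hx⟩ := isCountablyCompact_iff_seq_clusterPt.1
    CountablyCompactSpace.isCountablyCompact_univ u (Eventually.of_forall fun _ => mem_univ _)
  ⟨x, hx⟩

theorem CountablyCompactSpace.le_nhds_of_unique_clusterPt [CountablyCompactSpace X]
    {l : Filter X} [l.IsCountablyGenerated] {x : X} (h : ∀ y, ClusterPt y l → y = x) :
    l ≤ 𝓝 x := by
  refine (nhds_basis_opens x).ge_iff.2 fun s ⟨hxs, hs⟩ => ?_
  by_contra hsl
  have : NeBot (l ⊓ 𝓟 sᶜ) := ⟨mt mem_iff_inf_principal_compl.2 hsl⟩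
  obtain ⟨y, -, hy⟩ := CountablyCompactSpace.isCountablyCompact_univ
    (le_principal_iff.2 univ_mem : l ⊓ 𝓟 sᶜ ≤ 𝓟 univ)
  have hys : y ∈ sᶜ := isClosed_iff_clusterPt.1 hs.isClosed_compl y (hy.mono inf_le_right)
  exact hys (h y (hy.mono inf_le_left) ▸ hxs)

theorem ISemi.Scattered.seqCompactSpace [CountablyCompactSpace X] [RegularSpace X]
    (hX : ISemi.Scattered X) : SeqCompactSpace X := by
  refine ⟨fun u _ => ?_⟩
  obtain ⟨x, hxu, U, hU, hUD⟩ :=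
    hX {x | MapClusterPt x atTop u} (CountablyCompactSpace.exists_mapClusterPt u)
  have hxU : x ∈ U := (hUD.symm ▸ mem_singleton x : x ∈ U ∩ _).1
  obtain ⟨C, ⟨hCx, hC⟩, hCU⟩ := (closed_nhds_basis x).mem_iff.1 (hU.mem_nhds hxU)
  obtain ⟨φ, hφ, hφC⟩ := extraction_of_frequently_atTop (hxu.frequently hCx)
  refine ⟨x, mem_univ x, φ, hφ, CountablyCompactSpace.le_nhds_of_unique_clusterPt fun y hy => ?_⟩
  have hyC : y ∈ C :=
    isClosed_iff_clusterPt.1 hC y (hy.mono (tendsto_principal.2 (Eventually.of_forall hφC)))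
  have hyD : y ∈ U ∩ {x | MapClusterPt x atTop u} :=
    ⟨hCU hyC, MapClusterPt.of_comp hφ.tendsto_atTop hy⟩
  rwa [hUD] at hyD

end CountablyCompact

theorem Set.exists_subseq_root_of_encard_le {α : Type*} (m : ℕ) (s : ℕ → Set α)
    (hs : ∀ k, (s k).encard ≤ m) :
    ∃ (φ : ℕ → ℕ) (r : Set α), StrictMono φ ∧ (∀ k, r ⊆ s (φ k)) ∧
      ∀ p ∉ r, ∀ᶠ k in atTop, p ∉ s (φ k) := by
  induction m generalizing s with
  | zero =>
    have hempty : ∀ k, s k = ∅ := fun k => by simpa using hs k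
    exact ⟨id, ∅, strictMono_id, fun _ => empty_subset _,
      fun p _ => Eventually.of_forall fun k => by simp [hempty]⟩
  | succ m ih =>
    by_cases hall : ∀ p, ∀ᶠ k in atTop, p ∉ s k
    · exact ⟨id, ∅, strictMono_id, fun _ => empty_subset _, fun p _ => hall p⟩
    simp only [not_forall, not_eventually, not_not] at hall
    obtain ⟨p, hp⟩ := hall
    obtain ⟨ψ, hψ, hpψ⟩ := extraction_of_frequently_atTop hp
    have hs' : ∀ k, (s (ψ k) \ {p}).encard ≤ m := fun k => by
      rw [encard_sdiff_singleton_of_mem (hpψ k), tsub_le_iff_right]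
      exact_mod_cast hs (ψ k)
    obtain ⟨φ, r, hφ, hr, hout⟩ := ih (fun k => s (ψ k) \ {p}) hs'
    refine ⟨ψ ∘ φ, insert p r, hψ.comp hφ,
      fun k => insert_subset (hpψ _) ((hr k).trans sdiff_subset), fun q hq => ?_⟩
    rw [mem_insert_iff, not_or] at hq
    exact (hout q hq.2).mono fun k hk hqk => hk ⟨hqk, hq.1⟩

namespace ISemi

variable {ι : Type*} {n : ℕ}

def graph (f : Elem ι n) : Set (ι × ι) := {p | p.2 ∈ f.1 p.1}

theorem val_mul (f g : Elem ι n) : (f * g).1 = f.1.trans g.1 := rfl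

theorem graph_injective : Function.Injective (graph : Elem ι n → Set (ι × ι)) := fun _ _ h =>
  Subtype.ext <| PEquiv.ext fun a => Option.ext fun b => Set.ext_iff.1 h (a, b)

theorem encard_graph_le (f : Elem ι n) : (graph f).encard ≤ n := by
  have hinj : InjOn Prod.fst (graph f) := by
    rintro ⟨a, b⟩ hab ⟨a', b'⟩ hab' (rfl : a = a')
    simp_all [graph]
  calc (graph f).encard = (Prod.fst '' graph f).encard := hinj.encard_image.symm
    _ ≤ {a | (f.1 a).isSome}.encard := encard_mono <| by
        rintro _ ⟨⟨a, b⟩, hab, rfl⟩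
        simp_all [graph]
    _ ≤ n := f.2

open Classical in
noncomputable def partialId (A : Set ι) (hA : A.encard ≤ n) : Elem ι n :=
  ⟨PEquiv.ofSet A, by simpa [PEquiv.ofSet] using hA⟩

theorem graph_partialId_mul {A : Set ι} (hA : A.encard ≤ n) (f : Elem ι n) :
    graph (partialId A hA * f) = {p ∈ graph f | p.1 ∈ A} := by
  ext ⟨a, b⟩
  simp only [graph, mem_ofPred_eq]
  rw [val_mul]
  simp only [partialId, PEquiv.mem_trans, PEquiv.mem_ofSet_iff]
  constructor
  · rintro ⟨c, ⟨rfl, hc⟩, hb⟩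
    exact ⟨hb, hc⟩
  · rintro ⟨hb, ha⟩
    exact ⟨a, ⟨rfl, ha⟩, hb⟩

theorem isIdem_partialId {A : Set ι} (hA : A.encard ≤ n) : IsIdem (partialId A hA) := by
  refine graph_injective ?_
  rw [graph_partialId_mul]
  ext ⟨a, b⟩
  simp only [graph, mem_ofPred_eq, partialId, PEquiv.mem_ofSet_iff]
  exact ⟨And.left, fun h => ⟨h, h.1 ▸ h.2⟩⟩

theorem IsIdem.eq_of_mem {e : Elem ι n} (he : IsIdem e) {a b : ι} (hab : b ∈ e.1 a) : b = a := by
  have hbb : b ∈ e.1 b := by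
    obtain ⟨c, hc, hbc⟩ := (PEquiv.mem_trans _ _ _ _).1 ((congrArg Subtype.val he).symm ▸ hab)
    rwa [← Option.mem_unique hab hc] at hbc
  exact PEquiv.inj e.1 hbb hab

theorem graph_mul_subset_of_isIdem {e : Elem ι n} (he : IsIdem e) (f : Elem ι n) :
    graph (e * f) ⊆ graph f := by
  rintro ⟨a, b⟩ hab
  obtain ⟨c, hc, hbc⟩ := (PEquiv.mem_trans _ _ _ _).1 hab
  rwa [he.eq_of_mem hc] at hbc

theorem mem_upset_iff_graph_subset {f g : Elem ι n} : g ∈ upset f ↔ graph f ⊆ graph g := by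
  refine ⟨fun ⟨e, he, hfg⟩ => hfg ▸ graph_mul_subset_of_isIdem he g,
    fun h => ⟨_, isIdem_partialId f.2, graph_injective ?_⟩⟩
  rw [graph_partialId_mul]
  ext ⟨a, b⟩
  refine ⟨fun hab => ⟨h hab, Option.isSome_of_mem hab⟩, fun ⟨hab, ha⟩ => ?_⟩
  obtain ⟨c, hc⟩ := Option.isSome_iff_exists.1 ha
  have hac : (a, c) ∈ graph f := hc
  obtain rfl : b = c := Option.mem_unique (show b ∈ g.1 a from hab) (show c ∈ g.1 a from h hac)
  exact hac

theorem exists_graph_eq_of_subset {f : Elem ι n} {r : Set (ι × ι)} (hr : r ⊆ graph f) :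
    ∃ g : Elem ι n, graph g = r := by
  have hA : (Prod.fst '' r).encard ≤ n :=
    (encard_image_le _ _).trans ((encard_mono hr).trans (encard_graph_le f))
  refine ⟨partialId _ hA * f, ?_⟩
  rw [graph_partialId_mul]
  ext ⟨a, b⟩
  refine ⟨fun ⟨hab, ⟨⟨a', b'⟩, hab', ha'⟩⟩ => ?_, fun hab => ⟨hr hab, mem_image_of_mem _ hab⟩⟩
  obtain rfl : a' = a := ha'
  obtain rfl : b = b' :=
    Option.mem_unique (show b ∈ f.1 a' from hab) (show b' ∈ f.1 a' from hr hab')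
  exact hab'

theorem tendsto_tauc_of_graph {α : Type*} {l : Filter α} {v : α → Elem ι n} {g : Elem ι n}
    (hsub : ∀ᶠ a in l, graph g ⊆ graph (v a)) (hout : ∀ p ∉ graph g, ∀ᶠ a in l, p ∉ graph (v a)) :
    Tendsto v l (@nhds _ (tauc ι n) g) := by
  rw [tauc, TopologicalSpace.tendsto_nhds_generateFrom_iff]
  rintro _ ⟨f, F, -, rfl⟩ ⟨hfg, hgF⟩
  simp only [mem_iUnion₂, not_exists] at hgF
  have hf : ∀ᶠ a in l, v a ∈ upset f := hsub.mono fun a ha =>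
    mem_upset_iff_graph_subset.2 ((mem_upset_iff_graph_subset.1 hfg).trans ha)
  have hF : ∀ᶠ a in l, ∀ h ∈ F, v a ∉ upset h := (eventually_all_finset F).2 fun h hh => by
    obtain ⟨p, hph, hpg⟩ := not_subset.1 (mt mem_upset_iff_graph_subset.2 (hgF h hh))
    exact (hout p hpg).mono fun a ha hah => ha (mem_upset_iff_graph_subset.1 hah hph)
  filter_upwards [hf, hF] with a haf haF
  simpa [haf] using haF

theorem seqCompactSpace_tauc (ι : Type*) (n : ℕ) : @SeqCompactSpace (Elem ι n) (tauc ι n) := by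
  refine @SeqCompactSpace.mk _ (tauc ι n) fun u _ => ?_
  obtain ⟨φ, r, hφ, hr, hout⟩ :=
    Set.exists_subseq_root_of_encard_le n (graph ∘ u) fun k => encard_graph_le (u k)
  obtain ⟨g, rfl⟩ := exists_graph_eq_of_subset (hr 0)
  exact ⟨g, mem_univ g, φ, hφ, tendsto_tauc_of_graph (Eventually.of_forall hr) hout⟩

end ISemi

theorem stmt14_general (ι : Type*) (n : ℕ) :
    (∀ (X : Type u) (tX : TopologicalSpace X), @ISemi.CountablyCompact X tX →
      @ISemi.Scattered X tX → @T3Space X tX → @SeqCompactSpace X tX) ∧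
    @SeqCompactSpace (ISemi.Elem ι n) (tauc ι n) :=
  ⟨fun _ _ hcc hsc _ => have := hcc.countablyCompactSpace; hsc.seqCompactSpace,
    ISemi.seqCompactSpace_tauc ι n⟩

theorem stmt14 (ι : Type*) [Infinite ι] (n : ℕ) (hn : 0 < n) :
    (∀ (X : Type u) (tX : TopologicalSpace X), @ISemi.CountablyCompact X tX →
      @ISemi.Scattered X tX → @T3Space X tX → @SeqCompactSpace X tX) ∧
    @SeqCompactSpace (ISemi.Elem ι n) (tauc ι n) :=
  stmt14_general ι n
end
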